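/- The Gauss measure is invariant for the Markov operator U: for every bounded Borel measurable function f on [0,1], ∫₀¹ Uf(x) γ(dx) = ∫₀¹ f(x) γ(dx), where Uf(x) = ∑_{i=1}^∞ P_i(x) f(1/(x+i)). -/

import Mathlib

open MeasureTheory

/-- The Gauss measure `γ(A) = (1/log 2) ∫_A dx/(x+1)` on Borel subsets of `[0,1]`. -/
noncomputable def gaussMeasure : Measure ℝ :=
  (volume.restrict (Set.Icc (0 : ℝ) 1)).withDensity
    (fun x => ENNReal.ofReal ((1 / Real.log 2) * (1 / (x + 1))))

/-- The Markov operator `Uf(x) = ∑_{i=1}^∞ P_i(x) f(1/(x+i))` with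
`P_i(x) = (x+1)/((x+i)(x+i+1))`. -/
noncomputable def Uop (f : ℝ → ℝ) : ℝ → ℝ :=
  fun x => ∑' i : ℕ+, (x + 1) / ((x + (i : ℝ)) * (x + (i : ℝ) + 1)) * f (1 / (x + (i : ℝ)))

/-!
Dividing by the density, `Uf(x) / (x + 1) = ∑ᵢ f(1/(x+i)) / ((x+i)(x+i+1))`, a series dominated
by `C / i²`, so it may be integrated termwise over `[0, 1]`. The substitution `u = 1/(x+i)` turns
the `i`-th term into the integral of `f(u) / (u + 1)` over `[1/(i+1), 1/i]`, and these intervals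
tile `(0, 1]`.
-/

open Set

lemma integral_gaussMeasure (g : ℝ → ℝ) :
    ∫ x, g x ∂gaussMeasure = (Real.log 2)⁻¹ * ∫ x in Icc (0 : ℝ) 1, g x / (x + 1) := by
  unfold gaussMeasure
  rw [integral_withDensity_eq_integral_toReal_smul (by fun_prop)
    (ae_of_all _ fun _ => ENNReal.ofReal_lt_top), ← integral_const_mul]
  refine setIntegral_congr_fun measurableSet_Icc fun x hx => ?_
  have hx0 : 0 ≤ x := hx.1
  rw [ENNReal.toReal_ofReal (by positivity), smul_eq_mul]
  ring

lemma image_inv_add_Icc_zero_one {a : ℝ} (ha : 0 < a) :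
    (fun x : ℝ => (x + a)⁻¹) '' Icc 0 1 = Icc (a + 1)⁻¹ a⁻¹ := by
  ext u
  constructor
  · rintro ⟨x, ⟨hx0, hx1⟩, rfl⟩
    exact ⟨inv_anti₀ (by positivity) (by linarith), inv_anti₀ ha (by linarith)⟩
  · rintro ⟨hu1, hu2⟩
    have hu : 0 < u := (inv_pos.2 (by positivity)).trans_le hu1
    refine ⟨u⁻¹ - a, ⟨?_, ?_⟩, by simp⟩
    · linarith [(le_inv_comm₀ ha hu).2 hu2]
    · linarith [(inv_le_comm₀ (by positivity) hu).1 hu1]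

lemma setIntegral_Icc_comp_inv_add (f : ℝ → ℝ) {a : ℝ} (ha : 0 < a) :
    ∫ x in Icc (0 : ℝ) 1, f (x + a)⁻¹ / ((x + a) * (x + a + 1))
      = ∫ u in Icc (a + 1)⁻¹ a⁻¹, f u / (u + 1) := by
  have hderiv : ∀ x ∈ Icc (0 : ℝ) 1,
      HasDerivWithinAt (fun x => (x + a)⁻¹) (-1 / (x + a) ^ 2) (Icc 0 1) x := fun x hx =>
    (((hasDerivAt_id x).add_const a).inv (by have := hx.1; positivity)).hasDerivWithinAt
  have hinj : InjOn (fun x : ℝ => (x + a)⁻¹) (Icc 0 1) := fun x _ y _ hxy => by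
    simpa using inv_injective hxy
  rw [← image_inv_add_Icc_zero_one ha,
    integral_image_eq_integral_abs_deriv_smul measurableSet_Icc hderiv hinj]
  refine setIntegral_congr_fun measurableSet_Icc fun x hx => ?_
  have : 0 < x + a := by have := hx.1; positivity
  rw [abs_div, abs_neg, abs_one, abs_of_pos (by positivity), smul_eq_mul]
  field_simp
  ring

lemma iUnion_Ioc_inv_succ_inv : ⋃ i : ℕ+, Ioc ((i : ℝ) + 1)⁻¹ (i : ℝ)⁻¹ = Ioc 0 1 := by
  ext u
  simp only [mem_iUnion, mem_Ioc]
  constructor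
  · rintro ⟨i, hi1, hi2⟩
    exact ⟨(inv_pos.2 (by positivity)).trans hi1,
      hi2.trans (inv_le_one_of_one_le₀ (Nat.one_le_cast.2 i.pos))⟩
  · rintro ⟨hu0, hu1⟩
    have hn : 1 ≤ ⌊u⁻¹⌋₊ := (Nat.one_le_floor_iff _).2 ((one_le_inv₀ hu0).2 hu1)
    have hn' : (0 : ℝ) < ⌊u⁻¹⌋₊ := by exact_mod_cast hn
    refine ⟨⟨⌊u⁻¹⌋₊, hn⟩, ?_, ?_⟩
    · exact (inv_lt_comm₀ (by positivity) hu0).2 (Nat.lt_floor_add_one _)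
    · exact (le_inv_comm₀ hu0 hn').2 (Nat.floor_le (inv_nonneg.2 hu0.le))

lemma pairwise_disjoint_Ioc_inv_succ_inv :
    Pairwise (Function.onFun Disjoint fun i : ℕ+ => Ioc ((i : ℝ) + 1)⁻¹ (i : ℝ)⁻¹) := by
  have hanti : Antitone fun i : ℕ+ => (i : ℝ)⁻¹ := fun i _ hij =>
    inv_anti₀ (Nat.cast_pos.2 i.pos) (by exact_mod_cast hij)
  simpa using hanti.pairwise_disjoint_on_Ioc_succ

lemma hasSum_setIntegral_Icc_inv_succ_inv {g : ℝ → ℝ} (hg : IntegrableOn g (Icc 0 1)) :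
    HasSum (fun i : ℕ+ => ∫ u in Icc ((i : ℝ) + 1)⁻¹ (i : ℝ)⁻¹, g u)
      (∫ u in Icc (0 : ℝ) 1, g u) := by
  simp only [integral_Icc_eq_integral_Ioc]
  have hg' := hg.mono_set Ioc_subset_Icc_self
  rw [← iUnion_Ioc_inv_succ_inv] at hg' ⊢
  exact hasSum_integral_iUnion (fun _ => measurableSet_Ioc) pairwise_disjoint_Ioc_inv_succ_inv hg'

lemma summable_div_sq_pnat (C : ℝ) : Summable fun i : ℕ+ => C / (i : ℝ) ^ 2 := by
  simpa only [div_eq_mul_inv, Function.comp_def] using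
    ((Real.summable_nat_pow_inv.2 one_lt_two).comp_injective PNat.coe_injective).mul_left C

section Bounded

variable {f : ℝ → ℝ} {C : ℝ}

lemma abs_comp_inv_add_div_le (hC : ∀ x ∈ Icc (0 : ℝ) 1, |f x| ≤ C) {a x : ℝ} (ha : 1 ≤ a)
    (hx : x ∈ Icc (0 : ℝ) 1) :
    |f (x + a)⁻¹ / ((x + a) * (x + a + 1))| ≤ C / a ^ 2 := by
  obtain ⟨hx0, -⟩ := hx
  have hfC := hC (x + a)⁻¹ ⟨by positivity, inv_le_one_of_one_le₀ (by linarith)⟩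
  rw [abs_div, abs_of_pos (show 0 < (x + a) * (x + a + 1) by positivity)]
  exact div_le_div₀ ((abs_nonneg _).trans hfC) hfC (by positivity) (by nlinarith)

lemma hasSum_Uop_div_add_one (hC : ∀ x ∈ Icc (0 : ℝ) 1, |f x| ≤ C) {x : ℝ}
    (hx : x ∈ Icc (0 : ℝ) 1) :
    HasSum (fun i : ℕ+ => f (x + i)⁻¹ / ((x + i) * (x + i + 1))) (Uop f x / (x + 1)) := by
  have hs : Summable fun i : ℕ+ => f (x + i)⁻¹ / ((x + i) * (x + i + 1)) :=
    (summable_div_sq_pnat C).of_norm_bounded fun i =>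
      abs_comp_inv_add_div_le hC (Nat.one_le_cast.2 i.pos) hx
  have hUop : Uop f x = (x + 1) * ∑' i : ℕ+, f (x + i)⁻¹ / ((x + i) * (x + i + 1)) := by
    rw [← tsum_mul_left]
    exact tsum_congr fun i => by rw [one_div]; ring
  rw [hUop, mul_div_cancel_left₀ _ (by linarith [hx.1])]
  exact hs.hasSum

lemma hasSum_setIntegral_Uop_div_add_one (hf : Measurable f)
    (hC : ∀ x ∈ Icc (0 : ℝ) 1, |f x| ≤ C) :
    HasSum (fun i : ℕ+ => ∫ x in Icc (0 : ℝ) 1, f (x + i)⁻¹ / ((x + i) * (x + i + 1)))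
      (∫ x in Icc (0 : ℝ) 1, Uop f x / (x + 1)) :=
  hasSum_integral_of_dominated_convergence (fun i _ => C / (i : ℝ) ^ 2)
    (fun _ => (by fun_prop : Measurable _).aestronglyMeasurable)
    (fun i => ae_restrict_of_forall_mem measurableSet_Icc fun _ hx =>
      abs_comp_inv_add_div_le hC (Nat.one_le_cast.2 i.pos) hx)
    (ae_of_all _ fun _ => summable_div_sq_pnat C) (integrable_const _)
    (ae_restrict_of_forall_mem measurableSet_Icc fun _ hx => hasSum_Uop_div_add_one hC hx)

lemma integrableOn_Icc_div_add_one (hf : Measurable f) (hC : ∀ x ∈ Icc (0 : ℝ) 1, |f x| ≤ C) :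
    IntegrableOn (fun u => f u / (u + 1)) (Icc 0 1) := by
  refine Integrable.of_bound (by fun_prop : Measurable _).aestronglyMeasurable C <|
    ae_restrict_of_forall_mem measurableSet_Icc fun u hu => ?_
  rw [Real.norm_eq_abs, abs_div, abs_of_pos (show 0 < u + 1 by linarith [hu.1])]
  exact (div_le_self (abs_nonneg _) (by linarith [hu.1])).trans (hC u hu)

end Bounded

/-- The Gauss measure is invariant for the Markov operator `U`: for every bounded Borel
measurable `f` on `[0,1]`, `∫₀¹ Uf dγ = ∫₀¹ f dγ`. -/
theorem gaussMeasure_invariant_Uop (f : ℝ → ℝ) (hmeas : Measurable f)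
    (hbdd : ∃ C : ℝ, ∀ x ∈ Set.Icc (0 : ℝ) 1, |f x| ≤ C) :
    ∫ x, Uop f x ∂gaussMeasure = ∫ x, f x ∂gaussMeasure := by
  obtain ⟨C, hC⟩ := hbdd
  have hterms := hasSum_setIntegral_Uop_div_add_one hmeas hC
  simp only [setIntegral_Icc_comp_inv_add f, Nat.cast_pos, PNat.pos] at hterms
  rw [integral_gaussMeasure, integral_gaussMeasure, hterms.unique
    (hasSum_setIntegral_Icc_inv_succ_inv (integrableOn_Icc_div_add_one hmeas hC))]
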